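/- arXiv:2407.12629 — 4 statements merged into one kernel-verified Lean document; each statement's English description precedes it below -/
import Mathlib

section
/- For the AdaGrad iteration x_{k+1,i} = x_{k,i} - h·∇_i f(x_k)/(√(y_{k+1,i}) + ε) with f L-smooth: if at iteration k one has y_{k+1,i} > (1-ε)² for all coordinates i (so that (√(y_{k+1,i}) + ε)² > √(y_{k+1,i}) + ε) and 0 < h < 2/L, then f(x_{k+1}) - f(x_k) ≤ -h(1 - Lh/2)·Σ_{i=1}^d |∇_i f(x_k)|²/(√(y_{k+1,i}) + ε) ≤ 0; in particular f(x_{k+1}) ≤ f(x_k). -/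
open scoped RealInnerProductSpace

lemma descent {F : Type*} [NormedAddCommGroup F] [InnerProductSpace ℝ F] [CompleteSpace F]
    (f : F → ℝ) (L : ℝ) (hL : 0 < L)
    (hdiff : Differentiable ℝ f)
    (hlip : ∀ x y : F, ‖gradient f x - gradient f y‖ ≤ L * ‖x - y‖)
    (x v : F) :
    f (x + v) ≤ f x + ⟪gradient f x, v⟫ + L / 2 * ‖v‖ ^ 2 := by
  set g : ℝ → ℝ := fun t => f (x + t • v) with hg
  have hgrad : ∀ z : F, HasGradientAt f (gradient f z) z :=
    fun z => (hdiff z).hasGradientAt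
  have hderiv : ∀ t : ℝ, HasDerivAt g ⟪gradient f (x + t • v), v⟫ t := by
    intro t
    have hc : HasDerivAt (fun t : ℝ => x + t • v) v t := by
      simpa using ((hasDerivAt_id t).smul_const v).const_add x
    have hf : HasFDerivAt f (InnerProductSpace.toDual ℝ F (gradient f (x + t • v))) (x + t • v) :=
      (hgrad (x + t • v)).hasFDerivAt
    simpa [InnerProductSpace.toDual_apply_apply, hg, Function.comp_def] using hf.comp_hasDerivAt t hc
  have hcont : Continuous fun t : ℝ => ⟪gradient f (x + t • v), v⟫ := by
    have hgc : Continuous (gradient f) := by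
      refine (LipschitzWith.of_dist_le_mul (K := L.toNNReal) ?_).continuous
      intro a b
      simpa [dist_eq_norm, Real.coe_toNNReal L hL.le] using hlip a b
    exact (Continuous.inner (hgc.comp (continuous_const.add (continuous_id.smul continuous_const))) continuous_const)
  have hftc : f (x + v) - f x = ∫ t in (0:ℝ)..1, ⟪gradient f (x + t • v), v⟫ := by
    have := intervalIntegral.integral_eq_sub_of_hasDerivAt (f := g)
      (f' := fun t => ⟪gradient f (x + t • v), v⟫) (a := 0) (b := 1)
      (fun t _ => hderiv t) (hcont.intervalIntegrable 0 1)
    simp [hg] at this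
    rw [← this]; congr 1; ext t; simp
  have hbound : ∀ t ∈ Set.Icc (0:ℝ) 1,
      ⟪gradient f (x + t • v), v⟫ ≤ ⟪gradient f x, v⟫ + L * t * ‖v‖ ^ 2 := by
    intro t ht
    have h1 : ⟪gradient f (x + t • v) - gradient f x, v⟫ ≤ ‖gradient f (x + t • v) - gradient f x‖ * ‖v‖ :=
      real_inner_le_norm _ _
    have h2 : ‖gradient f (x + t • v) - gradient f x‖ ≤ L * (t * ‖v‖) := by
      have := hlip (x + t • v) x
      simpa [norm_smul, abs_of_nonneg ht.1] using this
    nlinarith [inner_sub_left (𝕜 := ℝ) (gradient f (x + t • v)) (gradient f x) v, norm_nonneg v,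
      mul_le_mul_of_nonneg_right h2 (norm_nonneg v)]
  have hint : (∫ t in (0:ℝ)..1, ⟪gradient f (x + t • v), v⟫) ≤
      ∫ t in (0:ℝ)..1, (⟪gradient f x, v⟫ + L * t * ‖v‖ ^ 2) := by
    apply intervalIntegral.integral_mono_on (by norm_num)
      (hcont.intervalIntegrable 0 1)
      ((continuous_const.add ((continuous_const.mul continuous_id).mul continuous_const)).intervalIntegrable 0 1)
      hbound
  have hval : (∫ t in (0:ℝ)..1, (⟪gradient f x, v⟫ + L * t * ‖v‖ ^ 2)) =
      ⟪gradient f x, v⟫ + L / 2 * ‖v‖ ^ 2 := by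
    have hrw : (fun t : ℝ => L * t * ‖v‖ ^ 2) = fun t : ℝ => (L * ‖v‖ ^ 2) * t := by
      ext t; ring
    rw [intervalIntegral.integral_add (intervalIntegrable_const)
      (by rw [hrw]; exact ((continuous_const.mul continuous_id).intervalIntegrable 0 1)),
      hrw, intervalIntegral.integral_const_mul, integral_id]
    simp; ring
  linarith [hftc ▸ hint, hval ▸ hint]

theorem stmt_3 (d : ℕ) (f : EuclideanSpace ℝ (Fin d) → ℝ) (L h ε : ℝ)
    (hL : 0 < L) (hε0 : 0 < ε) (hε1 : ε < 1)
    (hdiff : Differentiable ℝ f)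
    (hlip : ∀ x y : EuclideanSpace ℝ (Fin d),
      ‖gradient f x - gradient f y‖ ≤ L * ‖x - y‖)
    (x : ℕ → EuclideanSpace ℝ (Fin d)) (y : ℕ → Fin d → ℝ)
    (hy0 : ∀ i, y 0 i = 0)
    (hy : ∀ k i, y (k + 1) i = y k i + (gradient f (x k) i) ^ 2)
    (hx : ∀ k i, x (k + 1) i =
      x k i - h * gradient f (x k) i / (Real.sqrt (y (k + 1) i) + ε))
    (k : ℕ)
    (hden : ∀ i, (1 - ε) ^ 2 < y (k + 1) i)
    (hh0 : 0 < h) (hh1 : h < 2 / L) :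
    f (x (k + 1)) - f (x k) ≤
      -h * (1 - L * h / 2) *
        ∑ i : Fin d, (gradient f (x k) i) ^ 2 / (Real.sqrt (y (k + 1) i) + ε)
    ∧ -h * (1 - L * h / 2) *
        ∑ i : Fin d, (gradient f (x k) i) ^ 2 / (Real.sqrt (y (k + 1) i) + ε) ≤ 0
    ∧ f (x (k + 1)) ≤ f (x k) := by
  set g : Fin d → ℝ := fun i => gradient f (x k) i with hgdef
  set den : Fin d → ℝ := fun i => Real.sqrt (y (k + 1) i) + ε with hdendef
  have hden1 : ∀ i, 1 < den i := by
    intro i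
    have h1 : (1 - ε) ≤ Real.sqrt ((1 - ε) ^ 2) := by
      rw [Real.sqrt_sq_eq_abs]; exact le_abs_self _
    have h2 : Real.sqrt ((1 - ε) ^ 2) < Real.sqrt (y (k + 1) i) :=
      Real.sqrt_lt_sqrt (sq_nonneg _) (hden i)
    simp only [hdendef]; linarith
  have hdenpos : ∀ i, 0 < den i := fun i => lt_trans one_pos (hden1 i)
  set v : EuclideanSpace ℝ (Fin d) := x (k + 1) - x k with hvdef
  have hvi : ∀ i, v i = -(h * g i / den i) := by
    intro i
    simp only [hvdef, PiLp.sub_apply, hx k i, hgdef, hdendef]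
    ring
  set S : ℝ := ∑ i : Fin d, g i ^ 2 / den i with hSdef
  have hSnonneg : 0 ≤ S :=
    Finset.sum_nonneg fun i _ => div_nonneg (sq_nonneg _) (hdenpos i).le
  have hinner : ⟪gradient f (x k), v⟫ = -h * S := by
    rw [hSdef, PiLp.inner_apply, Finset.mul_sum]
    apply Finset.sum_congr rfl
    intro i _
    rw [RCLike.inner_apply, hvi i]
    simp only [starRingEnd_apply, star_trivial]
    ring
  have hnorm : ‖v‖ ^ 2 ≤ h ^ 2 * S := by
    rw [← real_inner_self_eq_norm_sq, PiLp.inner_apply, hSdef, Finset.mul_sum]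
    apply Finset.sum_le_sum
    intro i _
    rw [RCLike.inner_apply, hvi i]
    simp only [starRingEnd_apply, star_trivial]
    have h1 : 1 < den i := hden1 i
    have h2 : 0 < den i := hdenpos i
    have key : g i ^ 2 / den i ^ 2 ≤ g i ^ 2 / den i := by
      apply div_le_div_of_nonneg_left (sq_nonneg _) h2
      nlinarith
    calc -(h * g i / den i) * -(h * g i / den i) = (h * g i / den i) ^ 2 := by ring
      _ = h ^ 2 * (g i ^ 2 / den i ^ 2) := by rw [div_pow, mul_pow, mul_div_assoc]
      _ ≤ h ^ 2 * (g i ^ 2 / den i) := by nlinarith [sq_nonneg h]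
  have hdesc := descent f L hL hdiff hlip (x k) v
  have hxv : x k + v = x (k + 1) := by simp [hvdef]
  rw [hxv, hinner] at hdesc
  have hLh : L * h < 2 := by
    rw [lt_div_iff₀ hL] at hh1
    nlinarith
  have hmain : f (x (k + 1)) - f (x k) ≤ -h * (1 - L * h / 2) * S := by
    nlinarith [mul_le_mul_of_nonneg_left hnorm (by positivity : (0:ℝ) ≤ L / 2)]
  have hsec : -h * (1 - L * h / 2) * S ≤ 0 := by
    apply mul_nonpos_of_nonpos_of_nonneg _ hSnonneg
    nlinarith
  exact ⟨hmain, hsec, by linarith⟩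
end

section
/- Suppose f : ℝ^d → ℝ is L-smooth, has finite minimum f_*, satisfies the PL inequality with constant l > 0, and along the AdaGrad iterates the denominators are uniformly bounded: √(y_{k+1,i}) + ε ≤ M for all i and all k ≥ T, and moreover (√(y_{k+1,i}) + ε)² ≥ √(y_{k+1,i}) + ε. If 0 < h < min{2/L, M/(2l)}, then f(x_{k+1}) - f_* ≤ (1 - c₁)(f(x_k) - f_*) for all k ≥ T, where c₁ = 2lh(1 - Lh/2)/M ∈ (0,1). -/
open Set

lemma descent_lemma {F : Type*} [NormedAddCommGroup F] [InnerProductSpace ℝ F] [CompleteSpace F]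
    (f : F → ℝ) (L : ℝ) (hdiff : Differentiable ℝ f)
    (hlip : ∀ x y : F, ‖gradient f x - gradient f y‖ ≤ L * ‖x - y‖)
    (x v : F) :
    f (x + v) ≤ f x + inner ℝ (gradient f x) v + L / 2 * ‖v‖ ^ 2 := by
  set g : F → F := gradient f with hg
  have hder : ∀ t : ℝ, HasDerivAt (fun s : ℝ => f (x + s • v))
      (inner ℝ (g (x + t • v)) v : ℝ) t := by
    intro t
    have h1 : HasDerivAt (fun s : ℝ => x + s • v) v t := by
      simpa using ((hasDerivAt_id t).smul_const v).const_add x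
    have h2 : HasFDerivAt f (InnerProductSpace.toDual ℝ F (g (x + t • v))) (x + t • v) :=
      (hdiff (x + t • v)).hasGradientAt
    simpa [Function.comp_def] using h2.comp_hasDerivAt t h1
  have key : ∀ t ∈ Icc (0:ℝ) 1, f (x + t • v) ≤
      f x + t * inner ℝ (g x) v + L * ‖v‖ ^ 2 * t ^ 2 / 2 := by
    intro t0 ht0
    refine image_le_of_deriv_right_le_deriv_boundary
      (a := 0) (b := 1) (f := fun t : ℝ => f (x + t • v))
      (f' := fun t => (inner ℝ (g (x + t • v)) v : ℝ))
      (B := fun t : ℝ => f x + t * inner ℝ (g x) v + L * ‖v‖ ^ 2 * t ^ 2 / 2)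
      (B' := fun t => inner ℝ (g x) v + L * ‖v‖ ^ 2 * t)
      (fun t _ => ((hder t).continuousAt).continuousWithinAt)
      (fun t ht => (hder t).hasDerivWithinAt)
      (by simp) (by fun_prop) (fun t ht => ?_) (fun t ht => ?_) ht0
    · refine HasDerivAt.hasDerivWithinAt ?_
      
      have : HasDerivAt (fun t : ℝ => f x + t * inner ℝ (g x) v + L * ‖v‖ ^ 2 * t ^ 2 / 2)
          (inner ℝ (g x) v + L * ‖v‖ ^ 2 * t) t := by
        have h1 : HasDerivAt (fun t : ℝ => t * (inner ℝ (g x) v : ℝ)) (inner ℝ (g x) v) t := by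
          simpa using (hasDerivAt_id t).mul_const (inner ℝ (g x) v : ℝ)
        have h2 : HasDerivAt (fun t : ℝ => L * ‖v‖ ^ 2 * t ^ 2 / 2)
            (L * ‖v‖ ^ 2 * t) t := by
          have := ((hasDerivAt_pow 2 t).const_mul (L * ‖v‖ ^ 2)).div_const 2
          refine this.congr_deriv ?_
          ring
        exact (h1.const_add (f x)).add h2
      exact this
    · have hb : (inner ℝ (g (x + t • v)) v : ℝ) - inner ℝ (g x) v ≤ L * ‖v‖ ^ 2 * t := by
        have h1 : (inner ℝ (g (x + t • v)) v : ℝ) - inner ℝ (g x) v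
            = inner ℝ (g (x + t • v) - g x) v := by
          rw [inner_sub_left]
        rw [h1]
        calc (inner ℝ (g (x + t • v) - g x) v : ℝ) ≤ ‖g (x + t • v) - g x‖ * ‖v‖ :=
              real_inner_le_norm _ _
          _ ≤ (L * ‖x + t • v - x‖) * ‖v‖ := by
              apply mul_le_mul_of_nonneg_right (hlip _ _) (norm_nonneg _)
          _ = L * ‖v‖ ^ 2 * t := by
              have : ‖x + t • v - x‖ = t * ‖v‖ := by
                simp [norm_smul, abs_of_nonneg ht.1]
              rw [this]; ring
      show (inner ℝ (g (x + t • v)) v : ℝ) ≤ inner ℝ (g x) v + L * ‖v‖ ^ 2 * t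
      linarith
  have h1 := key 1 (by norm_num)
  simp only [one_smul, one_mul, one_pow, mul_one] at h1
  linarith

theorem stmt_8 (d : ℕ) (f : EuclideanSpace ℝ (Fin d) → ℝ) (L l fstar h ε M : ℝ)
    (hL : 0 < L) (hl : 0 < l) (hε0 : 0 < ε) (hε1 : ε < 1) (hM : 0 < M)
    (hdiff : Differentiable ℝ f)
    (hlip : ∀ x y : EuclideanSpace ℝ (Fin d),
      ‖gradient f x - gradient f y‖ ≤ L * ‖x - y‖)
    (hmin : ∀ x, fstar ≤ f x) (hattain : ∃ x, f x = fstar)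
    (hPL : ∀ x : EuclideanSpace ℝ (Fin d),
      l * (f x - fstar) ≤ (1 / 2) * ‖gradient f x‖ ^ 2)
    (x : ℕ → EuclideanSpace ℝ (Fin d)) (y : ℕ → Fin d → ℝ)
    (hy0 : ∀ i, y 0 i = 0)
    (hy : ∀ k i, y (k + 1) i = y k i + (gradient f (x k) i) ^ 2)
    (hx : ∀ k i, x (k + 1) i =
      x k i - h * gradient f (x k) i / (Real.sqrt (y (k + 1) i) + ε))
    (T : ℕ)
    (hMbd : ∀ k, T ≤ k → ∀ i, Real.sqrt (y (k + 1) i) + ε ≤ M)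
    (hden : ∀ k, T ≤ k → ∀ i,
      Real.sqrt (y (k + 1) i) + ε ≤ (Real.sqrt (y (k + 1) i) + ε) ^ 2)
    (hh0 : 0 < h) (hh1 : h < min (2 / L) (M / (2 * l))) :
    (0 < 2 * l * h * (1 - L * h / 2) / M
      ∧ 2 * l * h * (1 - L * h / 2) / M < 1)
    ∧ ∀ k, T ≤ k → f (x (k + 1)) - fstar ≤
        (1 - 2 * l * h * (1 - L * h / 2) / M) * (f (x k) - fstar) := by

  have hhL : h < 2 / L := lt_of_lt_of_le hh1 (min_le_left _ _)
  have hhM : h < M / (2 * l) := lt_of_lt_of_le hh1 (min_le_right _ _)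
  have hLh : L * h < 2 := by
    have := (lt_div_iff₀ hL).mp hhL
    nlinarith
  have h2lh : 2 * l * h < M := by
    have := (lt_div_iff₀ (by positivity : (0:ℝ) < 2 * l)).mp hhM
    nlinarith
  have hcoef : 0 < 1 - L * h / 2 := by linarith
  have hc0 : 0 < 2 * l * h * (1 - L * h / 2) / M := by positivity
  have hc1 : 2 * l * h * (1 - L * h / 2) / M < 1 := by
    rw [div_lt_one hM]
    have h2lhpos : 0 < 2 * l * h := by positivity
    nlinarith [mul_nonneg h2lhpos.le (by positivity : (0:ℝ) ≤ L * h / 2)]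
  refine ⟨⟨hc0, hc1⟩, ?_⟩
  intro k hk
  set g : EuclideanSpace ℝ (Fin d) := gradient f (x k) with hgdef
  set D : Fin d → ℝ := fun i => Real.sqrt (y (k + 1) i) + ε with hD
  have hDpos : ∀ i, 0 < D i := fun i => by
    have := Real.sqrt_nonneg (y (k + 1) i); simp only [hD]; linarith
  set v : EuclideanSpace ℝ (Fin d) := WithLp.toLp 2 (fun i => -(h * g i / D i)) with hv
  have hxsucc : x (k + 1) = x k + v := by
    ext i
    have := hx k i
    simp only [PiLp.add_apply, hv, hD, hgdef, PiLp.toLp_apply]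
    rw [this]; ring
  have hdesc := descent_lemma f L hdiff hlip (x k) v
  set S1 : ℝ := ∑ i, g i ^ 2 / D i with hS1
  set S2 : ℝ := ∑ i, g i ^ 2 / D i ^ 2 with hS2
  have hinner : (inner ℝ g v : ℝ) = -(h * S1) := by
    simp only [hS1, PiLp.inner_apply, RCLike.inner_apply, conj_trivial, hv, PiLp.toLp_apply,
      Finset.mul_sum, neg_mul, ← Finset.sum_neg_distrib]
    apply Finset.sum_congr rfl
    intro i _
    ring
  have hnorm : ‖v‖ ^ 2 = h ^ 2 * S2 := by
    rw [← real_inner_self_eq_norm_sq]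
    simp only [hS2, PiLp.inner_apply, RCLike.inner_apply, conj_trivial, hv, PiLp.toLp_apply, Finset.mul_sum]
    apply Finset.sum_congr rfl
    intro i _
    field_simp
  have hG : ‖g‖ ^ 2 = ∑ i, g i ^ 2 := by
    rw [← real_inner_self_eq_norm_sq]
    simp only [PiLp.inner_apply, RCLike.inner_apply, conj_trivial]
    exact Finset.sum_congr rfl fun i _ => (sq (g i)).symm
  have hS21 : S2 ≤ S1 := by
    apply Finset.sum_le_sum
    intro i _
    exact div_le_div_of_nonneg_left (sq_nonneg _) (hDpos i) (hden k hk i)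
  have hS1M : ‖g‖ ^ 2 / M ≤ S1 := by
    rw [hG, Finset.sum_div]
    apply Finset.sum_le_sum
    intro i _
    exact div_le_div_of_nonneg_left (sq_nonneg _) (hDpos i) (hMbd k hk i)
  have hgap : 0 ≤ f (x k) - fstar := by linarith [hmin (x k)]
  have hPLk : 2 * l * (f (x k) - fstar) ≤ ‖g‖ ^ 2 := by
    have := hPL (x k); rw [← hgdef] at this; linarith
  have hcoef2 : 0 ≤ h - L * h ^ 2 / 2 := by nlinarith
  rw [← hgdef] at hdesc
  have step1 : f (x (k + 1)) ≤ f (x k) - (h - L * h ^ 2 / 2) * S1 := by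
    rw [hxsucc]
    have hLS : L / 2 * (h ^ 2 * S2) ≤ L / 2 * (h ^ 2 * S1) := by
      apply mul_le_mul_of_nonneg_left _ (by positivity)
      exact mul_le_mul_of_nonneg_left hS21 (sq_nonneg h)
    calc f (x k + v) ≤ f (x k) + inner ℝ g v + L / 2 * ‖v‖ ^ 2 := hdesc
      _ = f (x k) - h * S1 + L / 2 * (h ^ 2 * S2) := by rw [hinner, hnorm]; ring
      _ ≤ f (x k) - h * S1 + L / 2 * (h ^ 2 * S1) := by linarith
      _ = f (x k) - (h - L * h ^ 2 / 2) * S1 := by ring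
  have step2 : (h - L * h ^ 2 / 2) * (2 * l * (f (x k) - fstar) / M)
      ≤ (h - L * h ^ 2 / 2) * S1 := by
    apply mul_le_mul_of_nonneg_left _ hcoef2
    calc 2 * l * (f (x k) - fstar) / M ≤ ‖g‖ ^ 2 / M := by gcongr
      _ ≤ S1 := hS1M
  have final : f (x k) - fstar - (h - L * h ^ 2 / 2) * (2 * l * (f (x k) - fstar) / M)
      = (1 - 2 * l * h * (1 - L * h / 2) / M) * (f (x k) - fstar) := by
    field_simp
  linarith [step1, step2, final.le, final.ge]
end

section
/- Let g, m ≥ 0 be reals with g > 0 and m < ∞, let L > 0, and let β ∈ [0, 1/(1 + m/g)) and θ ∈ (β m /((1-β) g), 1). Then the quantity p = θ(1-β)g² - β m g is strictly positive, and there exists h₁ > 0 such that for all 0 < h ≤ h₁, θ(1-β)(1 - hL(1-β)/2)g² ≥ (hL/2)β²m² + β(1 - hL(1-β))·m·g. (In particular one may take h₁ = p/q with q = (L/2)(1-β)p + (L/2)β²m².) -/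
theorem stmt_11 (g m L β θ : ℝ)
    (hg : 0 < g) (hm : 0 ≤ m) (hL : 0 < L)
    (hβ0 : 0 ≤ β) (hβ1 : β < 1 / (1 + m / g))
    (hθ0 : β * m / ((1 - β) * g) < θ) (hθ1 : θ < 1) :
    0 < θ * (1 - β) * g ^ 2 - β * m * g ∧
    ∃ h₁ > (0 : ℝ), ∀ h : ℝ, 0 < h → h ≤ h₁ →
      h * L / 2 * β ^ 2 * m ^ 2 + β * (1 - h * L * (1 - β)) * m * g ≤
        θ * (1 - β) * (1 - h * L / 2 * (1 - β)) * g ^ 2 := by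
  have hgm : 0 < g + m := by linarith
  have hβlt : β * m < (1 - β) * g := by
    have h1 : 1 + m / g = (g + m) / g := by field_simp
    rw [h1, one_div_div] at hβ1
    rw [lt_div_iff₀ hgm] at hβ1
    nlinarith
  have h1β : 0 < 1 - β := by nlinarith [mul_nonneg hβ0 hm]
  have hp : 0 < θ * (1 - β) * g ^ 2 - β * m * g := by
    rw [div_lt_iff₀ (by positivity : 0 < (1 - β) * g)] at hθ0
    nlinarith
  refine ⟨hp, ?_⟩
  have hq : 0 < L / 2 * (1 - β) * (θ * (1 - β) * g ^ 2 - β * m * g)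
      + L / 2 * β ^ 2 * m ^ 2 := by
    have h2 : 0 < L / 2 * (1 - β) * (θ * (1 - β) * g ^ 2 - β * m * g) := by positivity
    nlinarith [sq_nonneg (β * m)]
  refine ⟨(θ * (1 - β) * g ^ 2 - β * m * g) /
      (L / 2 * (1 - β) * (θ * (1 - β) * g ^ 2 - β * m * g) + L / 2 * β ^ 2 * m ^ 2),
    div_pos hp hq, ?_⟩
  intro h hh0 hh1
  have key : h * (L / 2 * (1 - β) * (θ * (1 - β) * g ^ 2 - β * m * g)
      + L / 2 * β ^ 2 * m ^ 2) ≤ θ * (1 - β) * g ^ 2 - β * m * g := by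
    rw [le_div_iff₀ hq] at hh1
    linarith
  have hnn : 0 ≤ h * (L * ((1 - β) * (β * (m * g)))) := by positivity
  nlinarith [key, hnn]
end

section
/- (Stochastic AdaGrad expected descent, small-denominator case.) Let f be L-smooth with PL constant l > 0 and finite minimum f_*. Consider stochastic AdaGrad x_{k+1,i} = x_{k,i} - h·g_{i}(k)/(√(y_{k,i}) + ε) with unbiased stochastic gradients E_k[g_i(k)] = ∇_i f(x_k) and E_k[g_i(k)²] ≤ M + M_G|∇_i f(x_k)|², and suppose ε ≤ √(y_{k,i}) + ε ≤ 1 for all i and k. Then for 0 < h < min{2ε²/(L M_G), 1/(2l)}, E_k[f(x_{k+1})] - f_* ≤ (1 - c₂)(f(x_k) - f_*) + ω, where c₂ = 2lh(1 - L M_G h/(2ε²)) ∈ (0,1) and ω = L M d h²/(2ε²). -/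
open MeasureTheory
open scoped RealInnerProductSpace

set_option maxHeartbeats 1000000 in
theorem stmt_17 {Ω : Type*} [MeasurableSpace Ω] (P : Measure Ω)
    [IsProbabilityMeasure P]
    (d : ℕ) (f : EuclideanSpace ℝ (Fin d) → ℝ)
    (L l fstar h ε M MG : ℝ)
    (hL : 0 < L) (hl : 0 < l) (hε0 : 0 < ε) (hε1 : ε < 1)
    (hM : 0 ≤ M) (hMG : 0 < MG)
    (hdiff : Differentiable ℝ f)
    (hsmooth : ∀ x y : EuclideanSpace ℝ (Fin d),
      f y - f x ≤ ⟪y - x, gradient f x⟫ + L / 2 * ‖y - x‖ ^ 2)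
    (hmin : ∀ x, fstar ≤ f x)
    (hPL : ∀ x : EuclideanSpace ℝ (Fin d),
      l * (f x - fstar) ≤ (1 / 2) * ‖gradient f x‖ ^ 2)
    -- current iterate and accumulator
    (x : EuclideanSpace ℝ (Fin d)) (y : Fin d → ℝ)
    (hden : ∀ i, ε ≤ Real.sqrt (y i) + ε ∧ Real.sqrt (y i) + ε ≤ 1)
    -- stochastic gradient and next iterate
    (g : Ω → Fin d → ℝ) (X : Ω → EuclideanSpace ℝ (Fin d))
    (hX : ∀ ω i, X ω i = x i - h * g ω i / (Real.sqrt (y i) + ε))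
    (hgint : ∀ i, Integrable (fun ω => g ω i) P)
    (hg2int : ∀ i, Integrable (fun ω => (g ω i) ^ 2) P)
    (hfint : Integrable (fun ω => f (X ω)) P)
    (hunbiased : ∀ i, ∫ ω, g ω i ∂P = gradient f x i)
    (hsecond : ∀ i, ∫ ω, (g ω i) ^ 2 ∂P ≤ M + MG * (gradient f x i) ^ 2)
    (hh0 : 0 < h) (hh1 : h < min (2 * ε ^ 2 / (L * MG)) (1 / (2 * l))) :
    (0 < 2 * l * h * (1 - L * MG * h / (2 * ε ^ 2))
      ∧ 2 * l * h * (1 - L * MG * h / (2 * ε ^ 2)) < 1)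
    ∧ (∫ ω, f (X ω) ∂P) - fstar ≤
        (1 - 2 * l * h * (1 - L * MG * h / (2 * ε ^ 2))) * (f x - fstar)
          + L * M * d * h ^ 2 / (2 * ε ^ 2) := by
  set G : Fin d → ℝ := fun i => gradient f x i with hGdef
  set D : Fin d → ℝ := fun i => Real.sqrt (y i) + ε with hDdef
  have hDε : ∀ i, ε ≤ D i := fun i => (hden i).1
  have hD1 : ∀ i, D i ≤ 1 := fun i => (hden i).2
  have hDpos : ∀ i, 0 < D i := fun i => lt_of_lt_of_le hε0 (hDε i)
  have hεsq : (0:ℝ) < ε ^ 2 := by positivity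
  have hLMG : 0 < L * MG := mul_pos hL hMG
  have hhc1 : h < 2 * ε ^ 2 / (L * MG) := lt_of_lt_of_le hh1 (min_le_left _ _)
  have hhc2 : h < 1 / (2 * l) := lt_of_lt_of_le hh1 (min_le_right _ _)
  have hkey1 : h * (L * MG) < 2 * ε ^ 2 := (lt_div_iff₀ hLMG).mp hhc1
  have hkey2 : h * (2 * l) < 1 := (lt_div_iff₀ (by positivity)).mp hhc2
  have hclt1 : L * MG * h / (2 * ε ^ 2) < 1 := by
    rw [div_lt_one (by positivity)]; nlinarith
  have hcpos : 0 < L * MG * h / (2 * ε ^ 2) := by positivity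
  have hc2pos : 0 < 2 * l * h * (1 - L * MG * h / (2 * ε ^ 2)) := by
    apply mul_pos (by positivity); linarith
  have hc2lt1 : 2 * l * h * (1 - L * MG * h / (2 * ε ^ 2)) < 1 := by
    nlinarith
  refine ⟨⟨hc2pos, hc2lt1⟩, ?_⟩
  -- pointwise bound
  have hXsub : ∀ ω i, (X ω - x) i = -((h / D i) * g ω i) := by
    intro ω i
    have hc : (X ω - x) i = X ω i - x i := by simp
    rw [hc, hX ω i]
    simp only [hDdef]
    have hD : √(y i) + ε ≠ 0 := (hDpos i).ne'
    field_simp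
    ring
  have hpt : ∀ ω, f (X ω) ≤ f x + (∑ i, (-(h / D i) * G i) * g ω i)
      + L / 2 * ∑ i, (h / D i) ^ 2 * (g ω i) ^ 2 := by
    intro ω
    have h1 := hsmooth x (X ω)
    have hinner : ⟪X ω - x, gradient f x⟫ = ∑ i, (-(h / D i) * G i) * g ω i := by
      rw [PiLp.inner_apply]
      refine Finset.sum_congr rfl fun i _ => ?_
      rw [hXsub ω i]
      simp only [RCLike.inner_apply, starRingEnd_apply, star_trivial]
      ring
    have hnorm : ‖X ω - x‖ ^ 2 = ∑ i, (h / D i) ^ 2 * (g ω i) ^ 2 := by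
      rw [← real_inner_self_eq_norm_sq, PiLp.inner_apply]
      refine Finset.sum_congr rfl fun i _ => ?_
      rw [hXsub ω i]
      simp only [RCLike.inner_apply, starRingEnd_apply, star_trivial]
      ring
    rw [hinner, hnorm] at h1
    linarith
  -- integrability of RHS
  have hint1 : Integrable (fun ω => ∑ i, (-(h / D i) * G i) * g ω i) P :=
    integrable_finset_sum _ (fun i _ => (hgint i).const_mul _)
  have hint2 : Integrable (fun ω => L / 2 * ∑ i, (h / D i) ^ 2 * (g ω i) ^ 2) P :=
    (integrable_finset_sum _ (fun i _ => (hg2int i).const_mul _)).const_mul _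
  have hRHSint : Integrable (fun ω => f x + (∑ i, (-(h / D i) * G i) * g ω i)
      + L / 2 * ∑ i, (h / D i) ^ 2 * (g ω i) ^ 2) P :=
    ((integrable_const _).add hint1).add hint2
  have hIneq : ∫ ω, f (X ω) ∂P ≤ ∫ ω, (f x + (∑ i, (-(h / D i) * G i) * g ω i)
      + L / 2 * ∑ i, (h / D i) ^ 2 * (g ω i) ^ 2) ∂P :=
    integral_mono hfint hRHSint hpt
  have hI1 : ∫ ω, (∑ i, (-(h / D i) * G i) * g ω i) ∂P
      = ∑ i, (-(h / D i) * G i) * G i := by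
    rw [integral_finset_sum _ (fun i _ => (hgint i).const_mul _)]
    refine Finset.sum_congr rfl fun i _ => ?_
    rw [integral_const_mul, hunbiased i]
  have hI2 : ∫ ω, (L / 2 * ∑ i, (h / D i) ^ 2 * (g ω i) ^ 2) ∂P
      = L / 2 * ∑ i, (h / D i) ^ 2 * ∫ ω, (g ω i) ^ 2 ∂P := by
    rw [integral_const_mul, integral_finset_sum _ (fun i _ => (hg2int i).const_mul _)]
    congr 1
    exact Finset.sum_congr rfl fun i _ => integral_const_mul _ _
  have e1 : ∫ ω, (f x + (∑ i, (-(h / D i) * G i) * g ω i)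
      + L / 2 * ∑ i, (h / D i) ^ 2 * (g ω i) ^ 2) ∂P
      = (∫ ω, (f x + (∑ i, (-(h / D i) * G i) * g ω i)) ∂P)
        + ∫ ω, (L / 2 * ∑ i, (h / D i) ^ 2 * (g ω i) ^ 2) ∂P :=
    integral_add ((integrable_const _).add hint1) hint2
  have e2 : ∫ ω, (f x + (∑ i, (-(h / D i) * G i) * g ω i)) ∂P
      = (∫ _ω, f x ∂P) + ∫ ω, (∑ i, (-(h / D i) * G i) * g ω i) ∂P :=
    integral_add (integrable_const _) hint1
  have e3 : (∫ _ω, f x ∂P) = f x := by simp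
  rw [e1, e2, e3, hI1, hI2] at hIneq
  set S : ℝ := ∑ i, (G i) ^ 2 with hSdef
  have hSnorm : ‖gradient f x‖ ^ 2 = S := by
    rw [← real_inner_self_eq_norm_sq, PiLp.inner_apply, hSdef]
    refine Finset.sum_congr rfl fun i _ => ?_
    simp only [RCLike.inner_apply, starRingEnd_apply, star_trivial]
    rw [sq]
  have hSnonneg : 0 ≤ S := Finset.sum_nonneg fun i _ => sq_nonneg _
  -- bound term 1
  have hT1 : (∑ i, (-(h / D i) * G i) * G i) ≤ -h * S := by
    have hstep : ∀ i ∈ Finset.univ, (-(h / D i) * G i) * G i ≤ -h * (G i)^2 := by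
      intro i _
      have hle : h ≤ h / D i := by
        rw [le_div_iff₀ (hDpos i)]
        nlinarith [hD1 i, hh0.le]
      nlinarith [sq_nonneg (G i)]
    calc (∑ i, (-(h / D i) * G i) * G i) ≤ ∑ i, -h * (G i)^2 :=
          Finset.sum_le_sum hstep
      _ = -h * S := by rw [hSdef, Finset.mul_sum]
  -- bound term 2
  have hT2 : L / 2 * ∑ i, (h / D i) ^ 2 * ∫ ω, (g ω i) ^ 2 ∂P
      ≤ L * M * d * h ^ 2 / (2 * ε ^ 2) + (L * MG * h / (2 * ε ^ 2)) * h * S := by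
    have hstep : ∀ i ∈ Finset.univ, (h / D i) ^ 2 * ∫ ω, (g ω i) ^ 2 ∂P
        ≤ h ^ 2 / ε ^ 2 * (M + MG * (G i) ^ 2) := by
      intro i _
      have hnn : 0 ≤ ∫ ω, (g ω i) ^ 2 ∂P := integral_nonneg fun ω => sq_nonneg _
      have hub : ∫ ω, (g ω i) ^ 2 ∂P ≤ M + MG * (G i) ^ 2 := hsecond i
      have hd2 : (h / D i) ^ 2 ≤ h ^ 2 / ε ^ 2 := by
        rw [div_pow, div_le_div_iff₀ (by positivity) hεsq]
        have hde := hDε i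
        nlinarith [sq_nonneg h, mul_le_mul hde hde hε0.le (hDpos i).le]
      have hb : 0 ≤ M + MG * (G i)^2 := by nlinarith [sq_nonneg (G i)]
      calc (h / D i) ^ 2 * ∫ ω, (g ω i) ^ 2 ∂P
          ≤ (h / D i) ^ 2 * (M + MG * (G i) ^ 2) :=
            mul_le_mul_of_nonneg_left hub (by positivity)
        _ ≤ h ^ 2 / ε ^ 2 * (M + MG * (G i) ^ 2) :=
            mul_le_mul_of_nonneg_right hd2 hb
    have hsum : ∑ i, h ^ 2 / ε ^ 2 * (M + MG * (G i) ^ 2)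
        = h ^ 2 / ε ^ 2 * (M * d + MG * S) := by
      rw [← Finset.mul_sum, Finset.sum_add_distrib, Finset.sum_const,
        Finset.card_univ, ← Finset.mul_sum, ← hSdef]
      simp only [Fintype.card_fin, nsmul_eq_mul]
      ring
    calc L / 2 * ∑ i, (h / D i) ^ 2 * ∫ ω, (g ω i) ^ 2 ∂P
        ≤ L / 2 * (h ^ 2 / ε ^ 2 * (M * d + MG * S)) := by
          rw [← hsum]
          exact mul_le_mul_of_nonneg_left (Finset.sum_le_sum hstep) (by positivity)
      _ = L * M * d * h ^ 2 / (2 * ε ^ 2) + (L * MG * h / (2 * ε ^ 2)) * h * S := by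
          field_simp
  -- combine
  set c : ℝ := L * MG * h / (2 * ε ^ 2) with hcdef
  have hS2l : 2 * l * (f x - fstar) ≤ S := by
    have := hPL x
    rw [hSnorm] at this
    linarith
  have hu : 0 ≤ h * (1 - c) := by
    apply mul_nonneg hh0.le
    linarith
  have hhint : h * (1 - c) * (2 * l * (f x - fstar)) ≤ h * (1 - c) * S :=
    mul_le_mul_of_nonneg_left hS2l hu
  nlinarith [hIneq, hT1, hT2]
end
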